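/- Let θ ∈ (0,1), let (x,y,z,λ,γ) ∈ N₂(θ) with p=(y,z), ω=(λ,γ), duality gap μ, and let (ẋ,ẏ,ż,λ̇,γ̇) and (ẍ,ÿ,z̈,λ̈,γ̈) be first- and second-derivative directions, with ṗ=(ẏ,ż), ω̇=(λ̇,γ̇), p̈=(ÿ,z̈), ω̈=(λ̈,γ̈). Then: (i) ‖p̈/p‖² + ‖ω̈/ω‖² ≤ 4(1+θ)n²/(1−θ)³; (ii) ‖p̈/p‖²·‖ω̈/ω‖² ≤ (2(1+θ)n²/(1−θ)³)²; (iii) 0 ≤ p̈ᵀω̈/μ ≤ 2(1+θ)²n²/(1−θ)³; (iv) |ṗᵀω̈/μ| ≤ (2n(1+θ))^{3/2}/(1−θ)² and |p̈ᵀω̇/μ| ≤ (2n(1+θ))^{3/2}/(1−θ)². Here divisions are componentwise. -/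

import Mathlib

open scoped BigOperators

noncomputable section

/-- Euclidean dot product of two vectors. -/
def dotp {ι : Type*} [Fintype ι] (u v : ι → ℝ) : ℝ := ∑ i, u i * v i

/-- Euclidean norm of a vector. -/
def euclNorm {ι : Type*} [Fintype ι] (u : ι → ℝ) : ℝ := Real.sqrt (∑ i, (u i) ^ 2)

/-- Strict feasibility for the box-constrained QP KKT system. -/
def StrictlyFeasible {n : ℕ} (H : Matrix (Fin n) (Fin n) ℝ)
    (c x y z lam gam : Fin n → ℝ) : Prop :=
  H.mulVec x + c + lam - gam = 0 ∧
  x + y = (fun _ => 1) ∧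
  x - z = (fun _ => -1) ∧
  (∀ i, 0 < y i) ∧ (∀ i, 0 < z i) ∧ (∀ i, 0 < lam i) ∧ (∀ i, 0 < gam i)

/-- The central-path neighborhood `N₂(θ)`. -/
def N2 {n : ℕ} (H : Matrix (Fin n) (Fin n) ℝ) (c : Fin n → ℝ) (θ : ℝ)
    (x y z lam gam : Fin n → ℝ) : Prop :=
  StrictlyFeasible H c x y z lam gam ∧
  euclNorm (Sum.elim y z * Sum.elim lam gam
      - fun _ => dotp (Sum.elim y z) (Sum.elim lam gam) / (2 * (n : ℝ)))
    ≤ θ * (dotp (Sum.elim y z) (Sum.elim lam gam) / (2 * (n : ℝ)))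

/-- First-derivative direction of the arc at a point `(x,y,z,λ,γ)`. -/
def FirstDir {n : ℕ} (H : Matrix (Fin n) (Fin n) ℝ)
    (y z lam gam xd yd zd ld gd : Fin n → ℝ) : Prop :=
  H.mulVec xd + ld - gd = 0 ∧ yd = -xd ∧ zd = xd ∧
  lam * yd + y * ld = lam * y ∧ gam * zd + z * gd = gam * z

/-- Second-derivative direction of the arc at a point `(x,y,z,λ,γ)`. -/
def SecondDir {n : ℕ} (H : Matrix (Fin n) (Fin n) ℝ)
    (y z lam gam yd zd ld gd xdd ydd zdd ldd gdd : Fin n → ℝ) : Prop :=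
  H.mulVec xdd + ldd - gdd = 0 ∧ ydd = -xdd ∧ zdd = xdd ∧
  lam * ydd + y * ldd = (-2 : ℝ) • (ld * yd) ∧
  gam * zdd + z * gdd = (-2 : ℝ) • (gd * zd)

/-- The ellipse (arc) approximation point: `v(α) = v - v̇·sin α + v̈·(1 - cos α)`. -/
def arc {n : ℕ} (v vd vdd : Fin n → ℝ) (α : ℝ) : Fin n → ℝ :=
  v - Real.sin α • vd + (1 - Real.cos α) • vdd

/-- Corrector (centering) direction at a point `(x,y,z,λ,γ)` with target `μ`. -/
def CorrDir {n : ℕ} (H : Matrix (Fin n) (Fin n) ℝ)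
    (y z lam gam dx dy dz dl dg : Fin n → ℝ) (mu : ℝ) : Prop :=
  H.mulVec dx + dl - dg = 0 ∧ dy = -dx ∧ dz = dx ∧
  lam * dy + y * dl = (fun _ => mu) - lam * y ∧
  gam * dz + z * dg = (fun _ => mu) - gam * z

/-!
With `D = (p / ω)^{1/2}`, dividing a linearized complementarity equation `ω ∘ u + p ∘ v = r` by
`(p ∘ ω)^{1/2}` gives `‖D⁻¹u‖² + ‖Dv‖² + 2 uᵀv = ∑ rᵢ² / (pᵢωᵢ)`, and positive semidefiniteness
of `H` makes `ṗᵀω̇` and `p̈ᵀω̈` nonnegative. For the first derivatives `r = p ∘ ω`, so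
`‖D⁻¹ṗ‖² + ‖Dω̇‖² ≤ pᵀω = 2nμ`. For the second ones `r = -2 ṗ ∘ ω̇`, and
`‖ṗ ∘ ω̇‖² ≤ ‖D⁻¹ṗ‖² ‖Dω̇‖² ≤ (nμ)²` together with `pᵢωᵢ ≥ (1 - θ)μ` on `N₂(θ)` gives
`‖D⁻¹p̈‖² + ‖Dω̈‖² + 2 p̈ᵀω̈ ≤ 4n²μ / (1 - θ)`. Every claimed bound follows from these two, the
cross terms through Cauchy–Schwarz in the form `(uᵀv)² ≤ ‖D⁻¹u‖² ‖Dv‖²`.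
-/

open Finset
open scoped Matrix

/-- `weightedSqNorm (ω / p) u = ‖D⁻¹u‖²` and `weightedSqNorm (p / ω) v = ‖Dv‖²`. -/
def weightedSqNorm {ι : Type*} [Fintype ι] (a u : ι → ℝ) : ℝ := ∑ i, a i * u i ^ 2

lemma mul_le_sq_of_add_le_two_mul {a b t : ℝ} (ha : 0 ≤ a) (hb : 0 ≤ b) (h : a + b ≤ 2 * t) :
    a * b ≤ t ^ 2 := by
  nlinarith [four_mul_le_sq_add a b, mul_self_le_mul_self (add_nonneg ha hb) h]

lemma abs_div_le_of_sq_mul_le {d n θ μ : ℝ} (hn : 0 ≤ n) (hθ : θ ∈ Set.Ioo 0 1) (hμ : 0 < μ)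
    (h : d ^ 2 * ((1 - θ) * μ) ≤ (2 * n * μ) ^ 3) :
    |d / μ| ≤ (2 * n * (1 + θ)) ^ ((3 : ℝ) / 2) / (1 - θ) ^ 2 := by
  obtain ⟨hθ0, hθ1⟩ := hθ
  have hbase : 0 ≤ 2 * n * (1 + θ) := by positivity
  have hsq : ((2 * n * (1 + θ)) ^ ((3 : ℝ) / 2) / (1 - θ) ^ 2) ^ 2
      = (2 * n * (1 + θ)) ^ 3 / (1 - θ) ^ 4 := by
    rw [div_pow, ← Real.rpow_mul_natCast hbase]
    norm_num
    ring
  have hscaled : (d / μ) ^ 2 * (1 - θ) ≤ 8 * n ^ 3 := by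
    rw [div_pow, div_mul_eq_mul_div, div_le_iff₀ (by positivity)]
    nlinarith
  refine abs_le_of_sq_le_sq ?_ (by positivity)
  rw [hsq, le_div_iff₀ (by positivity)]
  have hθ' : (1 - θ) ^ 3 ≤ (1 + θ) ^ 3 := by gcongr; linarith
  calc (d / μ) ^ 2 * (1 - θ) ^ 4 = (d / μ) ^ 2 * (1 - θ) * (1 - θ) ^ 3 := by ring
    _ ≤ 8 * n ^ 3 * (1 + θ) ^ 3 := mul_le_mul hscaled hθ' (by positivity) (by positivity)
    _ = (2 * n * (1 + θ)) ^ 3 := by ring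

section Scaled

variable {ι : Type*} [Fintype ι]

lemma euclNorm_sq (u : ι → ℝ) : euclNorm u ^ 2 = ∑ i, u i ^ 2 :=
  Real.sq_sqrt (sum_nonneg fun _ _ => sq_nonneg _)

lemma abs_le_euclNorm (u : ι → ℝ) (i : ι) : |u i| ≤ euclNorm u :=
  Real.abs_le_sqrt (single_le_sum (f := fun j => u j ^ 2) (fun _ _ => sq_nonneg _) (mem_univ i))

lemma le_of_euclNorm_sub_const_le {u : ι → ℝ} {μ θ : ℝ}
    (h : euclNorm (u - fun _ => μ) ≤ θ * μ) (i : ι) : (1 - θ) * μ ≤ u i := by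
  have hi := (abs_le_euclNorm _ i).trans h
  rw [Pi.sub_apply, abs_le] at hi
  linarith [hi.1]

lemma weightedSqNorm_nonneg {a : ι → ℝ} (ha : ∀ i, 0 ≤ a i) (u : ι → ℝ) :
    0 ≤ weightedSqNorm a u :=
  sum_nonneg fun i _ => mul_nonneg (ha i) (sq_nonneg _)

lemma sum_mul_le_sum_mul_sum {f g : ι → ℝ} (hf : ∀ i, 0 ≤ f i) (hg : ∀ i, 0 ≤ g i) :
    ∑ i, f i * g i ≤ (∑ i, f i) * ∑ i, g i := by
  rw [sum_mul]
  exact sum_le_sum fun i _ => mul_le_mul_of_nonneg_left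
    (single_le_sum (fun j _ => hg j) (mem_univ i)) (hf i)

variable {p w : ι → ℝ}

lemma weightedSqNorm_add_two_dotp (hp : ∀ i, 0 < p i) (hw : ∀ i, 0 < w i) {u v r : ι → ℝ}
    (h : ∀ i, w i * u i + p i * v i = r i) :
    weightedSqNorm (w / p) u + weightedSqNorm (p / w) v + 2 * dotp u v
      = ∑ i, r i ^ 2 / (p i * w i) := by
  simp only [weightedSqNorm, dotp, mul_sum, ← sum_add_distrib]
  refine sum_congr rfl fun i _ => ?_
  have := (hp i).ne'
  have := (hw i).ne'
  rw [← h i, Pi.div_apply, Pi.div_apply]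
  field_simp
  ring

lemma sq_dotp_le_weightedSqNorm_mul (hp : ∀ i, 0 < p i) (hw : ∀ i, 0 < w i) (u v : ι → ℝ) :
    dotp u v ^ 2 ≤ weightedSqNorm (w / p) u * weightedSqNorm (p / w) v :=
  sum_sq_le_sum_mul_sum_of_sq_le_mul _
    (fun i _ => mul_nonneg (div_nonneg (hw i).le (hp i).le) (sq_nonneg _))
    (fun i _ => mul_nonneg (div_nonneg (hp i).le (hw i).le) (sq_nonneg _))
    fun i _ => by
      have := (hp i).ne'
      have := (hw i).ne'
      rw [Pi.div_apply, Pi.div_apply]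
      field_simp
      rfl

lemma sum_sq_mul_le_weightedSqNorm_mul (hp : ∀ i, 0 < p i) (hw : ∀ i, 0 < w i) (u v : ι → ℝ) :
    ∑ i, (u i * v i) ^ 2 ≤ weightedSqNorm (w / p) u * weightedSqNorm (p / w) v := by
  refine le_of_eq_of_le (sum_congr rfl fun i _ => ?_) (sum_mul_le_sum_mul_sum
    (fun i => mul_nonneg (div_nonneg (hw i).le (hp i).le) (sq_nonneg _))
    (fun i => mul_nonneg (div_nonneg (hp i).le (hw i).le) (sq_nonneg _)))
  have := (hp i).ne'
  have := (hw i).ne'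
  rw [Pi.div_apply, Pi.div_apply]
  field_simp

lemma sum_div_sq_le_weightedSqNorm_div (hp : ∀ i, 0 < p i) (hw : ∀ i, 0 < w i) {m : ℝ}
    (hm : 0 < m) (hlo : ∀ i, m ≤ p i * w i) (u : ι → ℝ) :
    ∑ i, (u i / p i) ^ 2 ≤ weightedSqNorm (w / p) u / m := by
  rw [weightedSqNorm, sum_div]
  refine sum_le_sum fun i _ => ?_
  have hterm : (u i / p i) ^ 2 = (w / p) i * u i ^ 2 / (p i * w i) := by
    have := (hp i).ne'
    have := (hw i).ne'
    rw [Pi.div_apply]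
    field_simp
  rw [hterm]
  exact div_le_div_of_nonneg_left
    (mul_nonneg (div_nonneg (hw i).le (hp i).le) (sq_nonneg _)) hm (hlo i)

variable {pd wd pdd wdd : ι → ℝ}

lemma weightedSqNorm_first_add_le (hp : ∀ i, 0 < p i) (hw : ∀ i, 0 < w i)
    (h1 : ∀ i, w i * pd i + p i * wd i = w i * p i) (hd1 : 0 ≤ dotp pd wd) :
    weightedSqNorm (w / p) pd + weightedSqNorm (p / w) wd ≤ dotp p w := by
  have hsum := weightedSqNorm_add_two_dotp hp hw h1
  have hrhs : ∑ i, (w i * p i) ^ 2 / (p i * w i) = dotp p w :=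
    sum_congr rfl fun i _ => by
      have := (hp i).ne'
      have := (hw i).ne'
      field_simp
  linarith

lemma weightedSqNorm_second_add_le (hp : ∀ i, 0 < p i) (hw : ∀ i, 0 < w i) {m : ℝ}
    (hm : 0 < m) (hlo : ∀ i, m ≤ p i * w i)
    (h2 : ∀ i, w i * pdd i + p i * wdd i = -2 * (wd i * pd i)) :
    weightedSqNorm (w / p) pdd + weightedSqNorm (p / w) wdd + 2 * dotp pdd wdd
      ≤ 4 * (weightedSqNorm (w / p) pd * weightedSqNorm (p / w) wd) / m := by
  rw [weightedSqNorm_add_two_dotp hp hw h2]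
  calc ∑ i, (-2 * (wd i * pd i)) ^ 2 / (p i * w i)
      ≤ ∑ i, 4 * (pd i * wd i) ^ 2 / m := sum_le_sum fun i _ => by
        rw [show (-2 * (wd i * pd i)) ^ 2 = 4 * (pd i * wd i) ^ 2 by ring]
        exact div_le_div_of_nonneg_left (by positivity) hm (hlo i)
    _ = 4 * (∑ i, (pd i * wd i) ^ 2) / m := by rw [mul_sum, sum_div]
    _ ≤ _ := by
      gcongr
      exact sum_sq_mul_le_weightedSqNorm_mul hp hw pd wd

theorem second_derivative_bounds_of_le_mul (hp : ∀ i, 0 < p i) (hw : ∀ i, 0 < w i) {m : ℝ}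
    (hm : 0 < m) (hlo : ∀ i, m ≤ p i * w i)
    (h1 : ∀ i, w i * pd i + p i * wd i = w i * p i)
    (h2 : ∀ i, w i * pdd i + p i * wdd i = -2 * (wd i * pd i))
    (hd1 : 0 ≤ dotp pd wd) (hd2 : 0 ≤ dotp pdd wdd) :
    (euclNorm (pdd / p) ^ 2 + euclNorm (wdd / w) ^ 2) * m ^ 2 ≤ dotp p w ^ 2 ∧
    2 * dotp pdd wdd * m ≤ dotp p w ^ 2 ∧
    dotp pd wdd ^ 2 * m ≤ dotp p w ^ 3 ∧
    dotp pdd wd ^ 2 * m ≤ dotp p w ^ 3 := by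
  set S := dotp p w
  have hwp : ∀ i, 0 ≤ (w / p) i := fun i => div_nonneg (hw i).le (hp i).le
  have hpw : ∀ i, 0 ≤ (p / w) i := fun i => div_nonneg (hp i).le (hw i).le
  have hAB := weightedSqNorm_first_add_le hp hw h1 hd1
  have hCD := weightedSqNorm_second_add_le hp hw hm hlo h2
  set A := weightedSqNorm (w / p) pd
  set B := weightedSqNorm (p / w) wd
  set C := weightedSqNorm (w / p) pdd
  set D := weightedSqNorm (p / w) wdd
  have hA : 0 ≤ A := weightedSqNorm_nonneg hwp pd
  have hB : 0 ≤ B := weightedSqNorm_nonneg hpw wd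
  have hC : 0 ≤ C := weightedSqNorm_nonneg hwp pdd
  have hD : 0 ≤ D := weightedSqNorm_nonneg hpw wdd
  have hCDm : (C + D + 2 * dotp pdd wdd) * m ≤ S ^ 2 := by
    rw [le_div_iff₀ hm] at hCD
    nlinarith [four_mul_le_sq_add A B]
  have hCm : C * m ≤ S ^ 2 := by nlinarith
  have hDm : D * m ≤ S ^ 2 := by nlinarith
  refine ⟨?_, by nlinarith, ?_, ?_⟩
  · have hX := sum_div_sq_le_weightedSqNorm_div hp hw hm hlo pdd
    have hY := sum_div_sq_le_weightedSqNorm_div hw hp hm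
      (fun i => (mul_comm (w i) (p i)).trans_ge (hlo i)) wdd
    rw [le_div_iff₀ hm] at hX hY
    simp only [euclNorm_sq, Pi.div_apply]
    nlinarith
  · calc dotp pd wdd ^ 2 * m ≤ A * D * m := by
          gcongr
          exact sq_dotp_le_weightedSqNorm_mul hp hw pd wdd
      _ = A * (D * m) := by ring
      _ ≤ S * S ^ 2 := mul_le_mul (by linarith) hDm (by positivity) (by linarith)
      _ = S ^ 3 := by ring
  · calc dotp pdd wd ^ 2 * m ≤ C * B * m := by
          gcongr
          exact sq_dotp_le_weightedSqNorm_mul hp hw pdd wd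
      _ = (C * m) * B := by ring
      _ ≤ S ^ 2 * S := mul_le_mul hCm (by linarith) hB (by positivity)
      _ = S ^ 3 := by ring

theorem second_derivative_bounds_of_central (hp : ∀ i, 0 < p i) (hw : ∀ i, 0 < w i) {n : ℕ}
    {θ μ : ℝ} (hθ : θ ∈ Set.Ioo 0 1) (hμ : 0 < μ) (hS : dotp p w = 2 * n * μ)
    (hlo : ∀ i, (1 - θ) * μ ≤ p i * w i)
    (h1 : ∀ i, w i * pd i + p i * wd i = w i * p i)
    (h2 : ∀ i, w i * pdd i + p i * wdd i = -2 * (wd i * pd i))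
    (hd1 : 0 ≤ dotp pd wd) (hd2 : 0 ≤ dotp pdd wdd) :
    (euclNorm (pdd / p)) ^ 2 + (euclNorm (wdd / w)) ^ 2
      ≤ 4 * (1 + θ) * (n : ℝ) ^ 2 / (1 - θ) ^ 3 ∧
    (euclNorm (pdd / p)) ^ 2 * (euclNorm (wdd / w)) ^ 2
      ≤ (2 * (1 + θ) * (n : ℝ) ^ 2 / (1 - θ) ^ 3) ^ 2 ∧
    (0 ≤ dotp pdd wdd / μ ∧
      dotp pdd wdd / μ ≤ 2 * (1 + θ) ^ 2 * (n : ℝ) ^ 2 / (1 - θ) ^ 3) ∧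
    |dotp pd wdd / μ| ≤ (2 * (n : ℝ) * (1 + θ)) ^ ((3 : ℝ) / 2) / (1 - θ) ^ 2 ∧
    |dotp pdd wd / μ| ≤ (2 * (n : ℝ) * (1 + θ)) ^ ((3 : ℝ) / 2) / (1 - θ) ^ 2 := by
  have h1θ : 0 < 1 - θ := sub_pos.2 hθ.2
  obtain ⟨hXY, hE, hd, hd'⟩ :=
    second_derivative_bounds_of_le_mul hp hw (mul_pos h1θ hμ) hlo h1 h2 hd1 hd2
  rw [hS] at hXY hE hd hd'
  have hn : (0 : ℝ) ≤ n := n.cast_nonneg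
  set X := euclNorm (pdd / p) ^ 2
  set Y := euclNorm (wdd / w) ^ 2
  have hsum : X + Y ≤ 4 * (1 + θ) * (n : ℝ) ^ 2 / (1 - θ) ^ 3 := by
    have : (X + Y) * (1 - θ) ^ 2 ≤ 4 * n ^ 2 := by
      rw [mul_pow, ← mul_assoc, mul_pow, mul_pow] at hXY
      nlinarith [sq_pos_of_pos hμ]
    rw [le_div_iff₀ (by positivity)]
    nlinarith [hθ.1, sq_nonneg (1 - θ), sq_nonneg (n : ℝ)]
  refine ⟨hsum, ?_, ⟨div_nonneg hd2 hμ.le, ?_⟩, abs_div_le_of_sq_mul_le hn hθ hμ hd,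
    abs_div_le_of_sq_mul_le hn hθ hμ hd'⟩
  · refine mul_le_sq_of_add_le_two_mul (sq_nonneg _) (sq_nonneg _) (hsum.trans_eq ?_)
    ring
  · have : dotp pdd wdd * (1 - θ) ≤ 2 * n ^ 2 * μ := by nlinarith
    rw [div_le_div_iff₀ hμ (by positivity)]
    have hθ2 : (1 - θ) ^ 2 ≤ (1 + θ) ^ 2 := by gcongr; linarith [hθ.1]
    calc dotp pdd wdd * (1 - θ) ^ 3 = dotp pdd wdd * (1 - θ) * (1 - θ) ^ 2 := by ring
      _ ≤ 2 * n ^ 2 * μ * (1 + θ) ^ 2 := mul_le_mul this hθ2 (by positivity) (by positivity)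
      _ = _ := by ring

end Scaled

lemma dotp_sumElim {κ : Type*} [Fintype κ] (a b c d : κ → ℝ) :
    dotp (Sum.elim a b) (Sum.elim c d) = dotp a c + dotp b d :=
  Fintype.sum_sum_type _

lemma dotp_neg_sumElim_nonneg {κ : Type*} [Fintype κ] {H : Matrix κ κ ℝ} (hH : H.PosSemidef)
    {u l g : κ → ℝ} (h : H *ᵥ u + l - g = 0) : 0 ≤ dotp (Sum.elim (-u) u) (Sum.elim l g) := by
  obtain rfl := sub_eq_zero.1 h
  have hquad : dotp (Sum.elim (-u) u) (Sum.elim l (H *ᵥ u + l)) = u ⬝ᵥ H *ᵥ u := by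
    rw [dotp_sumElim]
    simp only [dotp, dotProduct, Pi.neg_apply, Pi.add_apply, mul_add, sum_add_distrib, neg_mul,
      sum_neg_distrib]
    ring
  exact hquad ▸ hH.dotProduct_mulVec_nonneg u

/-- bounds on the scaled second derivatives:
`‖p̈/p‖² + ‖ω̈/ω‖² ≤ 4(1+θ)n²/(1−θ)³`, `‖p̈/p‖²·‖ω̈/ω‖² ≤ (2(1+θ)n²/(1−θ)³)²`,
`0 ≤ p̈ᵀω̈/μ ≤ 2(1+θ)²n²/(1−θ)³`, and
`|ṗᵀω̈/μ|, |p̈ᵀω̇/μ| ≤ (2n(1+θ))^{3/2}/(1−θ)²`. -/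
theorem stmt_6 {n : ℕ} (hn : 0 < n) (H : Matrix (Fin n) (Fin n) ℝ) (hH : H.PosDef)
    (c x y z lam gam : Fin n → ℝ)
    (θ : ℝ) (hθ : θ ∈ Set.Ioo (0 : ℝ) 1)
    (hN : N2 H c θ x y z lam gam)
    (xd yd zd ld gd : Fin n → ℝ)
    (hfd : FirstDir H y z lam gam xd yd zd ld gd)
    (xdd ydd zdd ldd gdd : Fin n → ℝ)
    (hsd : SecondDir H y z lam gam yd zd ld gd xdd ydd zdd ldd gdd)
    (p w pd wd pdd wdd : Fin n ⊕ Fin n → ℝ)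
    (hp : p = Sum.elim y z) (hw : w = Sum.elim lam gam)
    (hpd : pd = Sum.elim yd zd) (hwd : wd = Sum.elim ld gd)
    (hpdd : pdd = Sum.elim ydd zdd) (hwdd : wdd = Sum.elim ldd gdd)
    (μ : ℝ) (hμ : μ = dotp p w / (2 * (n : ℝ))) :
    (euclNorm (pdd / p)) ^ 2 + (euclNorm (wdd / w)) ^ 2
      ≤ 4 * (1 + θ) * (n : ℝ) ^ 2 / (1 - θ) ^ 3 ∧
    (euclNorm (pdd / p)) ^ 2 * (euclNorm (wdd / w)) ^ 2
      ≤ (2 * (1 + θ) * (n : ℝ) ^ 2 / (1 - θ) ^ 3) ^ 2 ∧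
    (0 ≤ dotp pdd wdd / μ ∧
      dotp pdd wdd / μ ≤ 2 * (1 + θ) ^ 2 * (n : ℝ) ^ 2 / (1 - θ) ^ 3) ∧
    |dotp pd wdd / μ| ≤ (2 * (n : ℝ) * (1 + θ)) ^ ((3 : ℝ) / 2) / (1 - θ) ^ 2 ∧
    |dotp pdd wd / μ| ≤ (2 * (n : ℝ) * (1 + θ)) ^ ((3 : ℝ) / 2) / (1 - θ) ^ 2 := by
  obtain ⟨⟨-, -, -, hy, hz, hl, hg⟩, hcentral⟩ := hN
  obtain ⟨hHd, rfl, rfl, hc1, hc2⟩ := hfd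
  obtain ⟨hHdd, rfl, rfl, hc3, hc4⟩ := hsd
  subst hp hw hpd hwd hpdd hwdd
  have hp : ∀ i, 0 < Sum.elim y z i := by rintro (i | i); exacts [hy i, hz i]
  have hw : ∀ i, 0 < Sum.elim lam gam i := by rintro (i | i); exacts [hl i, hg i]
  have : Nonempty (Fin n) := Fin.pos_iff_nonempty.mp hn
  have hμ0 : 0 < μ := hμ ▸ div_pos
    (sum_pos (fun i _ => mul_pos (hp i) (hw i)) univ_nonempty) (by positivity)
  rw [← hμ] at hcentral
  refine second_derivative_bounds_of_central hp hw hθ hμ0 (by rw [hμ]; field_simp)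
    (le_of_euclNorm_sub_const_le hcentral) ?_ ?_
    (dotp_neg_sumElim_nonneg hH.posSemidef hHd) (dotp_neg_sumElim_nonneg hH.posSemidef hHdd)
  · rintro (i | i); exacts [congrFun hc1 i, congrFun hc2 i]
  · rintro (i | i); exacts [congrFun hc3 i, congrFun hc4 i]

end
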